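/- If ψ : [0,∞) → [0,∞) is increasing and regularly varying at infinity with index τ ∈ (0,1], f(x) = C·e^{−ψ(‖x‖)} is a density, and nf(R_n) → ξ ∈ (0,∞), then R_n ∼ ψ^←(log n) as n → ∞, where ψ^← is the inverse function of ψ. -/
import Mathlib


open Filter

/-- If `ψ : [0,∞) → [0,∞)` is increasing, regularly varying at infinity with index
`τ ∈ (0,1]`, with inverse `φ`, the density profile is `f(r) = C e^{-ψ(r)}`, and
`n f(R_n) → ξ ∈ (0,∞)`, then `R_n ∼ ψ^←(log n)` as `n → ∞`. -/
theorem stmt_10 (ψ φ : ℝ → ℝ) (τ : ℝ) (hτ0 : 0 < τ) (hτ1 : τ ≤ 1)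
    (hψ0 : ψ 0 = 0) (hψnonneg : ∀ x ≥ 0, 0 ≤ ψ x)
    (hψmono : StrictMonoOn ψ (Set.Ici 0))
    (hψRV : ∀ t > 0, Tendsto (fun r => ψ (r * t) / ψ r) atTop (nhds (t ^ τ)))
    (hψtop : Tendsto ψ atTop atTop)
    (hinv : ∀ x ≥ 0, φ (ψ x) = x) (hinv' : ∀ y ≥ 0, 0 ≤ φ y ∧ ψ (φ y) = y)
    (C : ℝ) (hC : 0 < C)
    (R : ℕ → ℝ) (hRnonneg : ∀ n, 0 ≤ R n) (ξ : ℝ) (hξ : 0 < ξ)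
    (hlim : Tendsto (fun n : ℕ => (n : ℝ) * (C * Real.exp (-ψ (R n)))) atTop (nhds ξ)) :
    Tendsto (fun n : ℕ => R n / φ (Real.log n)) atTop (nhds 1) := by
  -- φ tends to infinity
  have hφtop : Tendsto φ atTop atTop := by
    rw [tendsto_atTop_atTop]
    intro M
    refine ⟨max (ψ (max M 0)) 0, fun y hy => ?_⟩
    have hy0 : 0 ≤ y := le_trans (le_max_right _ _) hy
    obtain ⟨hφy0, hψφy⟩ := hinv' y hy0
    by_contra h
    push_neg at h
    have hlt : φ y < max M 0 := lt_of_lt_of_le h (le_max_left _ _)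
    have := hψmono hφy0 (le_max_right M 0) hlt
    rw [hψφy] at this
    have := le_trans (le_max_left (ψ (max M 0)) 0) hy
    linarith
  have hloglim : Tendsto (fun n : ℕ => Real.log n) atTop atTop :=
    Real.tendsto_log_atTop.comp tendsto_natCast_atTop_atTop
  have hφlog : Tendsto (fun n : ℕ => φ (Real.log n)) atTop atTop :=
    hφtop.comp hloglim
  -- ψ (R n) / log n → 1
  have hL : Tendsto (fun n : ℕ => Real.log ((n : ℝ) * (C * Real.exp (-ψ (R n)))))
      atTop (nhds (Real.log ξ)) := (Real.continuousAt_log hξ.ne').tendsto.comp hlim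
  have heq : ∀ᶠ n : ℕ in atTop, ψ (R n) / Real.log n =
      1 + (Real.log C - Real.log ((n : ℝ) * (C * Real.exp (-ψ (R n))))) / Real.log n := by
    filter_upwards [eventually_ge_atTop 2] with n hn
    have hn1 : (1 : ℝ) < n := by exact_mod_cast hn
    have hlogn : 0 < Real.log n := Real.log_pos hn1
    rw [Real.log_mul (by positivity) (by positivity), Real.log_mul hC.ne' (Real.exp_pos _).ne',
      Real.log_exp]
    field_simp
    ring
  have h1 : Tendsto (fun n : ℕ => ψ (R n) / Real.log n) atTop (nhds 1) := by
    have : Tendsto (fun n : ℕ =>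
        1 + (Real.log C - Real.log ((n : ℝ) * (C * Real.exp (-ψ (R n))))) / Real.log n)
        atTop (nhds (1 + 0)) :=
      tendsto_const_nhds.add ((tendsto_const_nhds.sub hL).div_atTop hloglim)
    rw [add_zero] at this
    exact this.congr' (heq.mono fun n h => h.symm)
  -- For t > 0, ψ (φ (log n) * t) / log n → t ^ τ
  have ht : ∀ t > 0, Tendsto (fun n : ℕ => ψ (φ (Real.log n) * t) / Real.log n)
      atTop (nhds (t ^ τ)) := by
    intro t htpos
    have h := ((hψRV t htpos).comp hφlog)
    refine h.congr' ?_
    filter_upwards [eventually_ge_atTop 2] with n hn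
    have hn1 : (1 : ℝ) < n := by exact_mod_cast hn
    have hlogn : (0 : ℝ) ≤ Real.log n := (Real.log_pos hn1).le
    simp only [Function.comp]
    rw [(hinv' _ hlogn).2]
  rw [Metric.tendsto_atTop]
  intro ε hε
  set e := min ε (1/2) with he
  have he0 : 0 < e := lt_min hε (by norm_num)
  have he1 : e < 1 := lt_of_le_of_lt (min_le_right _ _) (by norm_num)
  have hup : (1 : ℝ) < (1 + e) ^ τ := Real.one_lt_rpow_iff_of_pos (by linarith) |>.mpr (Or.inl ⟨by linarith, hτ0⟩)
  have hdown : (1 - e) ^ τ < 1 := Real.rpow_lt_one (by linarith) (by linarith) hτ0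
  have hA : ∀ᶠ n : ℕ in atTop, ψ (R n) / Real.log n < ψ (φ (Real.log n) * (1 + e)) / Real.log n :=
    h1.eventually_lt (ht (1 + e) (by linarith)) hup
  have hB : ∀ᶠ n : ℕ in atTop, ψ (φ (Real.log n) * (1 - e)) / Real.log n < ψ (R n) / Real.log n :=
    (ht (1 - e) (by linarith)).eventually_lt h1 hdown
  have hφpos : ∀ᶠ n : ℕ in atTop, 0 < φ (Real.log n) := hφlog.eventually_gt_atTop 0
  have hkey : ∀ᶠ n : ℕ in atTop, dist (R n / φ (Real.log n)) 1 < ε := by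
    filter_upwards [hA, hB, hφpos, eventually_ge_atTop 2] with n hAn hBn hφp hn
    have hn1 : (1 : ℝ) < n := by exact_mod_cast hn
    have hlogn : 0 < Real.log n := Real.log_pos hn1
    have hA' : ψ (R n) < ψ (φ (Real.log n) * (1 + e)) := by
      exact (div_lt_div_iff_of_pos_right hlogn).mp hAn
    have hB' : ψ (φ (Real.log n) * (1 - e)) < ψ (R n) := by
      exact (div_lt_div_iff_of_pos_right hlogn).mp hBn
    have hRlt : R n < φ (Real.log n) * (1 + e) := by
      have := (hψmono.lt_iff_lt (Set.mem_Ici.mpr (hRnonneg n))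
        (Set.mem_Ici.mpr (by positivity : (0:ℝ) ≤ φ (Real.log n) * (1 + e)))).mp hA'
      exact this
    have hRgt : φ (Real.log n) * (1 - e) < R n := by
      have := (hψmono.lt_iff_lt
        (Set.mem_Ici.mpr (mul_nonneg hφp.le (by linarith) : (0:ℝ) ≤ φ (Real.log n) * (1 - e)))
        (Set.mem_Ici.mpr (hRnonneg n))).mp hB'
      exact this
    rw [Real.dist_eq, abs_sub_lt_iff]
    constructor
    · have : R n / φ (Real.log n) < 1 + e := by
        rw [div_lt_iff₀ hφp]; linarith [hRlt]
      have hee : e ≤ ε := min_le_left _ _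
      linarith
    · have : 1 - e < R n / φ (Real.log n) := by
        rw [lt_div_iff₀ hφp]; linarith [hRgt]
      have hee : e ≤ ε := min_le_left _ _
      linarith
  exact eventually_atTop.mp hkey
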